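/- Let c, d, e be contexts on B with |e| > 0, and let x, x' be nonempty primitive words over B. If x and x' are conjugate and the triple (c, d, e) is x-commuting, then (c, d, e) is x'-commuting. -/

import Mathlib

/-- `wpow x n` is the word `x` repeated `n` times (`x^n`). -/
def wpow {B : Type*} (x : List B) : ℕ → List B
  | 0 => []
  | n + 1 => x ++ wpow x n

/-- Length of a longest common factor (infix) of `u` and `v`. -/
noncomputable def lcfLen {B : Type*} (u v : List B) : ℕ :=
  sSup {n | ∃ w : List B, w.length = n ∧ w <:+: u ∧ w <:+: v}

/-- The factor distance `dist_f(u,v) = |u| + |v| - 2·|lcf(u,v)|`. -/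
noncomputable def distf {B : Type*} (u v : List B) : ℕ :=
  u.length + v.length - 2 * lcfLen u v

/-- A context is a pair of words; `capp c w = c.1 ++ w ++ c.2` is `c[w]`. -/
def capp {B : Type*} (c : List B × List B) (w : List B) : List B :=
  c.1 ++ w ++ c.2

/-- The length `|c|` of a context. -/
def clen {B : Type*} (c : List B × List B) : ℕ :=
  c.1.length + c.2.length

/-- Product of contexts: `(c·d)[w] = c[d[w]]`. -/
def cmul {B : Type*} (c d : List B × List B) : List B × List B :=
  (c.1 ++ d.1, d.2 ++ c.2)

/-- Power of a context: `c^n[w] = l^n ++ w ++ r^n`. -/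
def cpow {B : Type*} (c : List B × List B) (n : ℕ) : List B × List B :=
  (wpow c.1 n, wpow c.2 n)

/-- A nonempty word `x` is primitive if `x = y^p` with `p ≥ 1` implies `p = 1`. -/
def Primitive {B : Type*} (x : List B) : Prop :=
  x ≠ [] ∧ ∀ (y : List B) (p : ℕ), 1 ≤ p → x = wpow y p → p = 1

/-- Words `x` and `y` are conjugate. -/
def Conj {B : Type*} (x y : List B) : Prop :=
  ∃ t1 t2 : List B, x = t1 ++ t2 ∧ y = t2 ++ t1

/-- The triple of contexts `(c, d, e)` is `x`-commuting: there is a context `f`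
such that for every `i ≥ 1` there is `k` with `(e^i·d·c)[ε] = f[x^k]`. -/
def XCommuting {B : Type*} (c d e : List B × List B) (x : List B) : Prop :=
  ∃ f : List B × List B, ∀ i : ℕ, 1 ≤ i → ∃ k : ℕ,
    capp (cmul (cpow e i) (cmul d c)) [] = capp f (wpow x k)

/-! Write `x = t₁t₂` and `x' = t₂t₁`. Since `f[x^(k+1)] = (f₁t₁, t₂f₂)[x'^k]`, the only obstacle
is an exponent `k = 0`, and by comparing lengths this can happen only for `i = 1`, i.e. when
`(e·d·c)[ε] = f₁f₂`. Then `(e^i·d·c)[ε] = f[x^((i-1)m)]` with `m|x| = |e| > 0`, and comparing the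
cases `i = 2, 3` shows, by primitivity of `x`, that `e₁f₁ = f₁x^q` and `f₂e₂ = x^r f₂` with
`q + r = m`. Hence `t₁` is a prefix of `f₂` or `t₂` is a suffix of `f₁`, and moving that piece
across the hole turns every `f[x^k]` into `f'[x'^k]`. -/

section Words

variable {B : Type*}

@[simp] theorem wpow_zero (x : List B) : wpow x 0 = [] := rfl

theorem wpow_succ (x : List B) (n : ℕ) : wpow x (n + 1) = x ++ wpow x n := rfl

@[simp] theorem length_wpow (x : List B) (n : ℕ) : (wpow x n).length = n * x.length := by
  induction n with
  | zero => simp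
  | succ n ih => simp [wpow_succ, ih, Nat.succ_mul, Nat.add_comm]

theorem wpow_add (x : List B) (a b : ℕ) : wpow x (a + b) = wpow x a ++ wpow x b := by
  induction a with
  | zero => simp
  | succ a ih => rw [Nat.add_right_comm, wpow_succ, wpow_succ, ih, List.append_assoc]

theorem wpow_prefix_wpow (x : List B) {a b : ℕ} (hab : a ≤ b) : wpow x a <+: wpow x b := by
  obtain ⟨c, rfl⟩ := Nat.exists_eq_add_of_le hab
  exact ⟨_, (wpow_add x a c).symm⟩

theorem wpow_suffix_wpow (x : List B) {a b : ℕ} (hab : a ≤ b) : wpow x a <:+ wpow x b := by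
  obtain ⟨c, rfl⟩ := Nat.exists_eq_add_of_le hab
  exact ⟨_, by rw [Nat.add_comm, wpow_add]⟩

theorem prefix_wpow (x : List B) {n : ℕ} (hn : n ≠ 0) : x <+: wpow x n := by
  simpa [wpow_succ] using wpow_prefix_wpow x (Nat.one_le_iff_ne_zero.mpr hn)

theorem suffix_wpow (x : List B) {n : ℕ} (hn : n ≠ 0) : x <:+ wpow x n := by
  simpa [wpow_succ] using wpow_suffix_wpow x (Nat.one_le_iff_ne_zero.mpr hn)

theorem wpow_append_rotate (t₁ t₂ : List B) (n : ℕ) :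
    wpow (t₁ ++ t₂) n ++ t₁ = t₁ ++ wpow (t₂ ++ t₁) n := by
  induction n with
  | zero => simp
  | succ n ih => simp only [wpow_succ, List.append_assoc, ih]

theorem wpow_succ' (x : List B) (n : ℕ) : wpow x (n + 1) = wpow x n ++ x := by
  simpa [wpow_succ] using (wpow_append_rotate x [] n).symm

@[simp] theorem length_capp (c : List B × List B) (w : List B) :
    (capp c w).length = clen c + w.length := by
  simp [capp, clen]; omega

theorem capp_cmul (c d : List B × List B) (w : List B) :
    capp (cmul c d) w = capp c (capp d w) := by
  simp [capp, cmul]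

@[simp] theorem capp_cpow_zero (e : List B × List B) (w : List B) : capp (cpow e 0) w = w := by
  simp [capp, cpow]

theorem capp_cpow_succ (e : List B × List B) (n : ℕ) (w : List B) :
    capp (cpow e (n + 1)) w = capp e (capp (cpow e n) w) := by
  simp only [capp, cpow]
  rw [wpow_succ, wpow_succ']
  simp

@[simp] theorem clen_cpow (e : List B × List B) (n : ℕ) : clen (cpow e n) = n * clen e := by
  simp [clen, cpow, Nat.mul_add]

theorem capp_wpow_rotate_left (l t₁ t₂ g : List B) (k : ℕ) :
    capp (l, t₁ ++ g) (wpow (t₁ ++ t₂) k) = capp (l ++ t₁, g) (wpow (t₂ ++ t₁) k) := by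
  simp only [capp, List.append_assoc, ← wpow_append_rotate]

theorem capp_wpow_rotate_right (γ r t₁ t₂ : List B) (k : ℕ) :
    capp (γ ++ t₂, r) (wpow (t₁ ++ t₂) k) = capp (γ, t₂ ++ r) (wpow (t₂ ++ t₁) k) := by
  simp only [capp, List.append_assoc, ← wpow_append_rotate]

theorem capp_wpow_succ_rotate (l r t₁ t₂ : List B) (k : ℕ) :
    capp (l, r) (wpow (t₁ ++ t₂) (k + 1)) = capp (l ++ t₁, t₂ ++ r) (wpow (t₂ ++ t₁) k) := by
  rw [wpow_succ', ← List.append_assoc, wpow_append_rotate]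
  simp [capp]

theorem exists_eq_wpow_of_append_comm {u v : List B} (h : u ++ v = v ++ u) :
    ∃ z i j, u = wpow z i ∧ v = wpow z j := by
  induction hn : u.length + v.length using Nat.strong_induction_on generalizing u v with
  | _ n ih =>
  wlog huv : u.length ≤ v.length generalizing u v
  · obtain ⟨z, i, j, hv, hu⟩ := this h.symm (by omega) (by omega)
    exact ⟨z, j, i, hu, hv⟩
  rcases eq_or_ne u [] with rfl | hu
  · exact ⟨v, 0, 1, rfl, by simp [wpow_succ]⟩
  obtain ⟨w, rfl⟩ : u <+: v := List.prefix_of_prefix_length_le ⟨v, h⟩ ⟨u, rfl⟩ huv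
  have hw : u ++ w = w ++ u := by simpa using h
  obtain ⟨z, i, j, rfl, rfl⟩ :=
    ih _ (by simp [← hn, List.length_pos_iff.mpr hu]) hw rfl
  exact ⟨z, i, i + j, rfl, (wpow_add z i j).symm⟩

theorem Primitive.eq_nil_or_eq_nil_of_append_comm {u v : List B} (hx : Primitive (u ++ v))
    (h : u ++ v = v ++ u) : u = [] ∨ v = [] := by
  obtain ⟨z, i, j, rfl, rfl⟩ := exists_eq_wpow_of_append_comm h
  have hij : i + j ≠ 0 := by
    rintro hij
    obtain ⟨rfl, rfl⟩ : i = 0 ∧ j = 0 := by omega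
    exact hx.1 rfl
  have := hx.2 z (i + j) (Nat.one_le_iff_ne_zero.mpr hij) (wpow_add z i j).symm
  rcases Nat.eq_zero_or_pos i with rfl | hi
  · exact Or.inl rfl
  · exact Or.inr (by rw [show j = 0 by omega, wpow_zero])

theorem Primitive.eq_nil_of_append_prefix {x y : List B} (hx : Primitive x)
    (hy : y.length < x.length) (h : y ++ x <+: x ++ x) : y = [] := by
  obtain ⟨v, rfl⟩ : y <+: x :=
    List.prefix_of_prefix_length_le ((List.prefix_append y x).trans h) (List.prefix_append x x)
      hy.le
  have hyv : y ++ v <+: v ++ y := by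
    refine List.prefix_of_prefix_length_le (l₃ := v ++ y ++ v) ?_ (List.prefix_append _ _) ?_
    · simpa using h
    · simp [Nat.add_comm]
  rcases hx.eq_nil_or_eq_nil_of_append_comm (hyv.eq_of_length (by simp [Nat.add_comm])) with
    hy' | rfl
  · exact hy'
  · simp at hy

theorem Primitive.exists_eq_wpow_of_append_wpow_append {x p s : List B} (hx : Primitive x)
    {m n : ℕ} (hn : n ≠ 0) (hps : p ++ s = wpow x m)
    (h : p ++ wpow x n ++ s = wpow x m ++ wpow x n) : ∃ q r, p = wpow x q ∧ s = wpow x r := by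
  induction m generalizing p with
  | zero =>
    obtain ⟨rfl, rfl⟩ := List.append_eq_nil_iff.mp hps
    exact ⟨0, 0, rfl, rfl⟩
  | succ m ih =>
    by_cases hp : p.length < x.length
    · obtain rfl : p = [] := by
        refine hx.eq_nil_of_append_prefix hp (List.prefix_of_prefix_length_le
          (l₃ := wpow x (m + 1) ++ wpow x n) ?_ ?_ (by simpa using hp.le))
        · rw [← h, List.append_assoc]
          exact (List.prefix_append_right_inj p).mpr
            ((prefix_wpow x hn).trans (List.prefix_append _ s))
        · rw [← wpow_add]
          simpa [wpow_succ] using wpow_prefix_wpow x (show 2 ≤ m + 1 + n by omega)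
      exact ⟨0, m + 1, rfl, hps⟩
    · obtain ⟨p', rfl⟩ : x <+: p :=
        List.prefix_of_prefix_length_le (prefix_wpow x m.succ_ne_zero) ⟨s, hps⟩ (not_lt.mp hp)
      obtain ⟨q, r, rfl, rfl⟩ := ih (p := p') (by simpa [wpow_succ] using hps)
        (by simpa [wpow_succ] using h)
      exact ⟨q + 1, r, rfl, rfl⟩

theorem Primitive.exists_append_eq_append_wpow {x : List B} (hx : Primitive x)
    {e f : List B × List B} {m : ℕ} (hm : m ≠ 0)
    (h₁ : capp e (f.1 ++ f.2) = capp f (wpow x m))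
    (h₂ : capp e (capp f (wpow x m)) = capp f (wpow x (m + m))) :
    ∃ q r, q + r = m ∧ e.1 ++ f.1 = f.1 ++ wpow x q ∧ f.2 ++ e.2 = wpow x r ++ f.2 := by
  set p := (wpow x m).take e.1.length
  set s := (wpow x m).drop e.1.length
  have hps : p ++ s = wpow x m := List.take_append_drop _ _
  have hlen : e.1.length + e.2.length = m * x.length := by
    have := congrArg List.length h₁
    simp [clen] at this
    omega
  obtain ⟨hl, hr⟩ : e.1 ++ f.1 = f.1 ++ p ∧ f.2 ++ e.2 = s ++ f.2 := by
    refine List.append_inj ?_ (by simp [p]; omega)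
    simpa [capp, ← hps] using h₁
  have hmid : f.1 ++ (p ++ wpow x m ++ s) ++ f.2 = f.1 ++ (wpow x m ++ wpow x m) ++ f.2 :=
    calc f.1 ++ (p ++ wpow x m ++ s) ++ f.2 = (f.1 ++ p) ++ wpow x m ++ (s ++ f.2) := by simp
      _ = capp e (capp f (wpow x m)) := by rw [← hl, ← hr]; simp [capp]
      _ = f.1 ++ (wpow x m ++ wpow x m) ++ f.2 := by rw [h₂, wpow_add]; simp [capp]
  obtain ⟨q, r, hq, hr'⟩ := hx.exists_eq_wpow_of_append_wpow_append hm hps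
    (List.append_cancel_left (List.append_cancel_right hmid))
  refine ⟨q, r, ?_, hq ▸ hl, hr' ▸ hr⟩
  have := congrArg List.length hps
  rw [hq, hr', List.length_append, length_wpow, length_wpow, length_wpow, ← Nat.add_mul] at this
  exact Nat.eq_of_mul_eq_mul_right (List.length_pos_iff.mpr hx.1) this

theorem prefix_or_suffix_of_append_eq_append_wpow {e₁ f₁ f₂ t₁ t₂ : List B} {q : ℕ} (hq : q ≠ 0)
    (he : e₁ ++ f₁ = f₁ ++ wpow (t₁ ++ t₂) q) (hpre : e₁ <+: f₁ ++ f₂) :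
    t₁ <+: f₂ ∨ t₂ <:+ f₁ := by
  by_cases h : t₂.length ≤ f₁.length
  · refine Or.inr (List.suffix_of_suffix_length_le ?_ (List.suffix_append e₁ f₁) h)
    rw [he]
    exact ((List.suffix_append t₁ t₂).trans (suffix_wpow _ hq)).trans (List.suffix_append _ _)
  · have hlen : (f₁ ++ t₁).length ≤ e₁.length := by
      have h₁ := congrArg List.length he
      have h₂ : (t₁ ++ t₂).length ≤ q * (t₁ ++ t₂).length := Nat.le_mul_of_pos_left _ (by omega)
      simp only [List.length_append, length_wpow] at h₁ h₂ ⊢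
      omega
    have hfe : f₁ ++ t₁ <+: e₁ := by
      refine List.prefix_of_prefix_length_le ?_ (List.prefix_append e₁ f₁) hlen
      rw [he]
      exact (List.prefix_append_right_inj f₁).mpr
        ((List.prefix_append t₁ t₂).trans (prefix_wpow _ hq))
    exact Or.inl ((List.prefix_append_right_inj f₁).mp (hfe.trans hpre))

theorem prefix_or_suffix_of_append_eq_wpow_append {e₂ f₁ f₂ t₁ t₂ : List B} {r : ℕ} (hr : r ≠ 0)
    (he : f₂ ++ e₂ = wpow (t₁ ++ t₂) r ++ f₂) (hsuf : e₂ <:+ f₁ ++ f₂) :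
    t₁ <+: f₂ ∨ t₂ <:+ f₁ := by
  by_cases h : t₁.length ≤ f₂.length
  · refine Or.inl (List.prefix_of_prefix_length_le ?_ (List.prefix_append f₂ e₂) h)
    rw [he]
    exact ((List.prefix_append t₁ t₂).trans (prefix_wpow _ hr)).trans (List.prefix_append _ _)
  · have hlen : (t₂ ++ f₂).length ≤ e₂.length := by
      have h₁ := congrArg List.length he
      have h₂ : (t₁ ++ t₂).length ≤ r * (t₁ ++ t₂).length := Nat.le_mul_of_pos_left _ (by omega)
      simp only [List.length_append, length_wpow] at h₁ h₂ ⊢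
      omega
    have hfe : t₂ ++ f₂ <:+ e₂ := by
      refine List.suffix_of_suffix_length_le ?_ (List.suffix_append f₂ e₂) hlen
      rw [he]
      exact List.suffix_append_self_iff.mpr ((List.suffix_append t₁ t₂).trans (suffix_wpow _ hr))
    exact Or.inr (List.suffix_append_self_iff.mp (hfe.trans hsuf))

theorem prefix_or_suffix_of_capp_eq_append {e : List B × List B} {v f₁ f₂ t₁ t₂ : List B}
    (hx : Primitive (t₁ ++ t₂)) (he : 0 < clen e)
    (hf : ∀ i, 1 ≤ i → ∃ k, capp (cpow e i) v = capp (f₁, f₂) (wpow (t₁ ++ t₂) k))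
    (h₁ : capp e v = f₁ ++ f₂) : t₁ <+: f₂ ∨ t₂ <:+ f₁ := by
  obtain ⟨m, hm⟩ := hf 2 (by norm_num)
  obtain ⟨m', hm'⟩ := hf 3 (by norm_num)
  simp only [capp_cpow_succ, capp_cpow_zero, h₁] at hm hm'
  rw [hm] at hm'
  have hlen := congrArg List.length hm
  have hlen' := congrArg List.length hm'
  simp only [length_capp, List.length_append, length_wpow, clen] at hlen hlen' he
  have hm0 : m ≠ 0 := by
    rintro rfl
    simp only [zero_mul] at hlen
    omega
  obtain rfl : m' = m + m :=
    Nat.eq_of_mul_eq_mul_right (List.length_pos_iff.mpr hx.1) (by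
      simp only [List.length_append]
      linarith)
  obtain ⟨q, r, hqr, hl, hr⟩ := hx.exists_append_eq_append_wpow hm0 hm hm'
  rcases Nat.eq_zero_or_pos q with rfl | hq
  · exact prefix_or_suffix_of_append_eq_wpow_append (by omega) hr
      ⟨e.1 ++ v, by rw [← h₁, capp]⟩
  · exact prefix_or_suffix_of_append_eq_append_wpow hq.ne' hl
      ⟨v ++ e.2, by rw [← h₁, capp, List.append_assoc]⟩

theorem exists_forall_capp_cpow_eq_rotate {e f : List B × List B} {v t₁ t₂ : List B}
    (hx : Primitive (t₁ ++ t₂)) (he : 0 < clen e)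
    (hf : ∀ i, 1 ≤ i → ∃ k, capp (cpow e i) v = capp f (wpow (t₁ ++ t₂) k)) :
    ∃ f' : List B × List B, ∀ i, 1 ≤ i → ∃ k, capp (cpow e i) v = capp f' (wpow (t₂ ++ t₁) k) := by
  obtain ⟨f₁, f₂⟩ := f
  obtain ⟨k₁, hk₁⟩ := hf 1 le_rfl
  rw [capp_cpow_succ, capp_cpow_zero] at hk₁
  rcases Nat.eq_zero_or_pos k₁ with rfl | hk₁pos
  · rcases prefix_or_suffix_of_capp_eq_append hx he hf (by simpa [capp] using hk₁) with
      ⟨g, rfl⟩ | ⟨γ, rfl⟩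
    · exact ⟨(f₁ ++ t₁, g), fun i hi =>
        (hf i hi).imp fun k hk => hk.trans (capp_wpow_rotate_left f₁ t₁ t₂ g k)⟩
    · exact ⟨(γ, t₂ ++ f₂), fun i hi =>
        (hf i hi).imp fun k hk => hk.trans (capp_wpow_rotate_right γ f₂ t₁ t₂ k)⟩
  · refine ⟨(f₁ ++ t₁, t₂ ++ f₂), fun i hi => ?_⟩
    obtain ⟨k, hk⟩ := hf i hi
    -- `capp (cpow e i) v` is at least as long as `capp e v`, which is longer than `f`
    obtain ⟨k, rfl⟩ : ∃ j, k = j + 1 := by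
      refine Nat.exists_eq_add_one.mpr (Nat.pos_of_ne_zero ?_)
      rintro rfl
      have h₁ := congrArg List.length hk₁
      have h₂ := congrArg List.length hk
      have hi' : clen e ≤ i * clen e := Nat.le_mul_of_pos_left _ hi
      have hk₁len : 0 < k₁ * (t₁ ++ t₂).length :=
        Nat.mul_pos hk₁pos (List.length_pos_iff.mpr hx.1)
      simp only [length_capp, clen_cpow, length_wpow, zero_mul] at h₁ h₂
      omega
    exact ⟨k, hk.trans (capp_wpow_succ_rotate f₁ f₂ t₁ t₂ k)⟩

end Words

theorem conjugate_com_of_com_general {B : Type*} (c d e : List B × List B)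
    (he : 0 < clen e) (x x' : List B)
    (hx : Primitive x)
    (hconj : Conj x x') (hcom : XCommuting c d e x) :
    XCommuting c d e x' := by
  obtain ⟨t₁, t₂, rfl, rfl⟩ := hconj
  obtain ⟨f, hf⟩ := hcom
  simp only [XCommuting, capp_cmul] at hf ⊢
  exact exists_forall_capp_cpow_eq_rotate hx he hf

theorem conjugate_com_of_com {B : Type*} (c d e : List B × List B)
    (he : 0 < clen e) (x x' : List B)
    (hx : Primitive x) (hx' : Primitive x')
    (hconj : Conj x x') (hcom : XCommuting c d e x) :
    XCommuting c d e x' :=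
  conjugate_com_of_com_general c d e he x x' hx hconj hcom
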